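/- arXiv:1510.08512 — 4 statements merged into one kernel-verified Lean document; each statement's English description precedes it below -/
import Mathlib

section
/- Let p ≥ 1 and let Θ* be a symmetric positive definite p×p real matrix. For every symmetric p×p real matrix Δ such that Θ* + Δ is positive definite and ‖Δ‖_F ≤ 1, one has ⟨(Θ*)⁻¹ − (Θ* + Δ)⁻¹, Δ⟩ ≥ (‖Θ*‖_2 + 1)⁻² ‖Δ‖_F². (Lemma 1: restricted strong convexity of the Gaussian log-determinant loss.) -/
open Matrix

/-- Trace inner product ⟨U,V⟩ = tr(U Vᵀ). -/
noncomputable def traceInner {p : ℕ} (U V : Matrix (Fin p) (Fin p) ℝ) : ℝ :=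
  (U * Vᵀ).trace

/-- Frobenius norm. -/
noncomputable def frobNorm {p : ℕ} (U : Matrix (Fin p) (Fin p) ℝ) : ℝ :=
  Real.sqrt (∑ i, ∑ j, (U i j) ^ 2)

/-- Spectral norm (ℓ2 operator norm, i.e. the largest singular value). -/
noncomputable def specNorm {p : ℕ} (U : Matrix (Fin p) (Fin p) ℝ) : ℝ :=
  ‖(Matrix.toEuclideanCLM (𝕜 := ℝ) U : EuclideanSpace ℝ (Fin p) →L[ℝ] EuclideanSpace ℝ (Fin p))‖

/-!
Write `s = ‖Θ‖₂ + 1`. Both `Θ` and `Θ + Δ` are bounded above by `s • 1` in the Loewner order,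
the latter because `‖Δ‖₂ ≤ ‖Δ‖_F ≤ 1`; hence `Θ⁻¹` and `(Θ + Δ)⁻¹` are bounded below by
`s⁻¹ • 1`. By the resolvent identity `Θ⁻¹ - (Θ + Δ)⁻¹ = Θ⁻¹ Δ (Θ + Δ)⁻¹`, the inner product is
`tr (Θ⁻¹ · Δ (Θ + Δ)⁻¹ Δ) ≥ s⁻¹ tr ((Θ + Δ)⁻¹ · Δ²) ≥ s⁻² tr (Δ²) = s⁻² ‖Δ‖_F²`, using twice that
`tr (P Q)` is monotone in `P` when `Q` is positive semidefinite.
-/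

open scoped MatrixOrder

namespace Matrix

variable {n : Type*} [Fintype n]

theorem PosSemidef.trace_mul_nonneg {P Q : Matrix n n ℝ} (hP : P.PosSemidef)
    (hQ : Q.PosSemidef) : 0 ≤ (P * Q).trace := by
  classical
  have hS : (CFC.sqrt P).IsHermitian := (CFC.sqrt_nonneg P).posSemidef.isHermitian
  have h := (hQ.conjTranspose_mul_mul_same (CFC.sqrt P)).trace_nonneg
  rwa [hS.eq, trace_mul_cycle, CFC.sqrt_mul_sqrt_self P hP.nonneg] at h

variable [DecidableEq n]

theorem mul_trace_le_trace_mul_of_smul_one_le {c : ℝ} {P Q : Matrix n n ℝ}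
    (hP : c • (1 : Matrix n n ℝ) ≤ P) (hQ : Q.PosSemidef) : c * Q.trace ≤ (P * Q).trace := by
  have h := PosSemidef.trace_mul_nonneg hP hQ
  rwa [sub_mul, trace_sub, smul_mul, one_mul, trace_smul, smul_eq_mul, sub_nonneg] at h

theorem PosDef.inv_smul_one_le_inv {M : Matrix n n ℝ} (hM : M.PosDef) {s : ℝ}
    (h : M ≤ s • (1 : Matrix n n ℝ)) : s⁻¹ • (1 : Matrix n n ℝ) ≤ M⁻¹ := by
  have hpos := isStrictlyPositive_iff_posDef.mpr hM
  rw [← Algebra.algebraMap_eq_smul_one] at h ⊢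
  rw [le_algebraMap_iff_spectrum_le hM.isHermitian.isSelfAdjoint] at h
  refine algebraMap_le_of_le_spectrum (fun x hx => ?_) hM.inv.isHermitian.isSelfAdjoint
  lift M to (Matrix n n ℝ)ˣ using hM.isUnit
  rw [← coe_units_inv] at hx
  have hx' := spectrum.inv₀_mem_iff.mpr hx
  simpa using inv_anti₀ (hpos.spectrum_pos hx') (h _ hx')

end Matrix

variable {p : ℕ}

theorem frobNorm_sq_eq_traceInner_self (M : Matrix (Fin p) (Fin p) ℝ) :
    frobNorm M ^ 2 = traceInner M M := by
  rw [frobNorm, Real.sq_sqrt (by positivity)]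
  simp [traceInner, trace, mul_apply, sq]

section Frobenius

attribute [local instance] frobeniusNormedAddCommGroup

theorem frobNorm_eq_norm (M : Matrix (Fin p) (Fin p) ℝ) : frobNorm M = ‖M‖ := by
  rw [frobenius_norm_def, frobNorm, Real.sqrt_eq_rpow]
  simp

theorem specNorm_le_frobNorm (M : Matrix (Fin p) (Fin p) ℝ) : specNorm M ≤ frobNorm M := by
  rw [frobNorm_eq_norm]
  refine ContinuousLinearMap.opNorm_le_bound _ (norm_nonneg M) fun x => ?_
  calc ‖toEuclideanCLM (𝕜 := ℝ) M x‖ = ‖replicateCol Unit (M *ᵥ x.ofLp)‖ := by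
        rw [frobenius_norm_replicateCol]; rfl
    _ = ‖M * replicateCol Unit x.ofLp‖ := by rw [replicateCol_mulVec]
    _ ≤ ‖M‖ * ‖replicateCol Unit x.ofLp‖ := frobenius_norm_mul M _
    _ = ‖M‖ * ‖x‖ := by rw [frobenius_norm_replicateCol]

end Frobenius

theorem specNorm_add_le (A B : Matrix (Fin p) (Fin p) ℝ) :
    specNorm (A + B) ≤ specNorm A + specNorm B := by
  simpa only [specNorm, map_add] using norm_add_le _ _

theorem dotProduct_mulVec_le_specNorm_mul (M : Matrix (Fin p) (Fin p) ℝ) (x : Fin p → ℝ) :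
    x ⬝ᵥ M *ᵥ x ≤ specNorm M * (x ⬝ᵥ x) := by
  set x' : EuclideanSpace ℝ (Fin p) := WithLp.toLp 2 x
  have hx : x ⬝ᵥ x = ‖x'‖ ^ 2 := by
    rw [← real_inner_self_eq_norm_sq, EuclideanSpace.inner_eq_star_dotProduct]
    simp [x']
  calc x ⬝ᵥ M *ᵥ x = inner ℝ x' (toEuclideanCLM (𝕜 := ℝ) M x') :=
        (inner_toEuclideanCLM M x' x').symm
    _ ≤ ‖x'‖ * ‖toEuclideanCLM (𝕜 := ℝ) M x'‖ := real_inner_le_norm _ _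
    _ ≤ ‖x'‖ * (specNorm M * ‖x'‖) := by gcongr; exact ContinuousLinearMap.le_opNorm _ _
    _ = specNorm M * (x ⬝ᵥ x) := by rw [hx]; ring

theorem le_smul_one_of_specNorm_le {M : Matrix (Fin p) (Fin p) ℝ} (hM : M.IsHermitian) {c : ℝ}
    (h : specNorm M ≤ c) : M ≤ c • (1 : Matrix (Fin p) (Fin p) ℝ) := by
  refine .of_dotProduct_mulVec_nonneg ((isHermitian_one.smul (.all c)).sub hM) fun x => ?_
  have hxx : 0 ≤ x ⬝ᵥ x := by simpa using dotProduct_star_self_nonneg x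
  have hM_le := dotProduct_mulVec_le_specNorm_mul M x
  simp only [star_trivial, sub_mulVec, dotProduct_sub, smul_mulVec, one_mulVec, dotProduct_smul,
    smul_eq_mul]
  nlinarith

theorem rsc_log_det_general (p : ℕ)
    (Θ : Matrix (Fin p) (Fin p) ℝ) (hΘ : Θ.PosDef)
    (Δ : Matrix (Fin p) (Fin p) ℝ) (hΔ : Δ.IsSymm)
    (hpd : (Θ + Δ).PosDef) (hF : frobNorm Δ ≤ 1) :
    traceInner (Θ⁻¹ - (Θ + Δ)⁻¹) Δ ≥ ((specNorm Θ + 1) ^ 2)⁻¹ * (frobNorm Δ) ^ 2 := by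
  set s := specNorm Θ + 1
  set B := (Θ + Δ)⁻¹
  have hs : 0 ≤ s⁻¹ := inv_nonneg.mpr (add_nonneg (norm_nonneg _) zero_le_one)
  have hΔt : Δᵀ = Δ := hΔ
  have hA : s⁻¹ • 1 ≤ Θ⁻¹ :=
    hΘ.inv_smul_one_le_inv (le_smul_one_of_specNorm_le hΘ.isHermitian (by linarith))
  have hB : s⁻¹ • 1 ≤ B :=
    hpd.inv_smul_one_le_inv <| le_smul_one_of_specNorm_le hpd.isHermitian <|
      (specNorm_add_le Θ Δ).trans (by linarith [specNorm_le_frobNorm Δ])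
  have hΔΔ : (Δ * Δ).PosSemidef := by
    simpa [hΔt] using posSemidef_self_mul_conjTranspose Δ
  have hΔBΔ : (Δ * B * Δ).PosSemidef := by
    simpa [hΔt] using hpd.inv.posSemidef.mul_mul_conjTranspose_same Δ
  rw [ge_iff_le, frobNorm_sq_eq_traceInner_self, traceInner, traceInner, hΔt,
    inv_sub_inv (iff_of_true hΘ.isUnit hpd.isUnit), add_sub_cancel_left]
  calc (s ^ 2)⁻¹ * (Δ * Δ).trace = s⁻¹ * (s⁻¹ * (Δ * Δ).trace) := by
        rw [sq, mul_inv, mul_assoc]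
    _ ≤ s⁻¹ * (B * (Δ * Δ)).trace :=
        mul_le_mul_of_nonneg_left (mul_trace_le_trace_mul_of_smul_one_le hB hΔΔ) hs
    _ = s⁻¹ * (Δ * B * Δ).trace := by rw [trace_mul_comm B, trace_mul_cycle Δ B Δ]
    _ ≤ (Θ⁻¹ * (Δ * B * Δ)).trace := mul_trace_le_trace_mul_of_smul_one_le hA hΔBΔ
    _ = (Θ⁻¹ * Δ * B * Δ).trace := by simp only [Matrix.mul_assoc]

/-- Lemma 1: restricted strong convexity of the Gaussian log-determinant loss. -/
theorem rsc_log_det (p : ℕ) (hp : 1 ≤ p)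
    (Θ : Matrix (Fin p) (Fin p) ℝ) (hΘ : Θ.PosDef)
    (Δ : Matrix (Fin p) (Fin p) ℝ) (hΔ : Δ.IsSymm)
    (hpd : (Θ + Δ).PosDef) (hF : frobNorm Δ ≤ 1) :
    traceInner (Θ⁻¹ - (Θ + Δ)⁻¹) Δ ≥ ((specNorm Θ + 1) ^ 2)⁻¹ * (frobNorm Δ) ^ 2 :=
  rsc_log_det_general p Θ hΘ Δ hΔ hpd hF
end

section
/- Let p ≥ 1, let Θ* be a symmetric positive definite p×p real matrix, and let Δ be a symmetric p×p real matrix such that Θ* + Δ is positive definite and ‖Δ‖_F ≥ 1. Then ⟨(Θ*)⁻¹ − (Θ* + Δ)⁻¹, Δ⟩ ≥ (‖Θ*‖_2 + 1)⁻² ‖Δ‖_F. (Linear-rate restricted strong convexity outside the unit Frobenius ball, obtained by the rescaling argument in the proof of Lemma 2.) -/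
open Matrix

/-!
Write `s = ‖Θ‖₂` and `t = ‖Θ + Δ‖₂`. In the Loewner order `Θ⁻¹ ⪰ s⁻¹ I` and `(Θ + Δ)⁻¹ ⪰ t⁻¹ I`,
and `Θ⁻¹ - (Θ + Δ)⁻¹ = Θ⁻¹ Δ (Θ + Δ)⁻¹`, so the inner product `tr (Θ⁻¹ Δ (Θ + Δ)⁻¹ Δ)` is at least
`‖Δ‖_F² / (s t)`. Since `t ≤ s + ‖Δ‖₂ ≤ s + ‖Δ‖_F`, it remains to check the scalar inequality
`f² / (s (s + f)) ≥ f / (s + 1)²` for `f = ‖Δ‖_F ≥ 1`.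
-/

-- Under the L2 operator norm, `‖U‖` is definitionally `specNorm U`.
open scoped MatrixOrder Matrix.Norms.L2Operator

namespace Matrix

variable {n 𝕜 : Type*} [Fintype n] [DecidableEq n] [RCLike 𝕜]

lemma l2_opNorm_one_le : ‖(1 : Matrix n n 𝕜)‖ ≤ 1 := by
  rw [← diagonal_one, l2_opNorm_diagonal]
  exact pi_norm_le_iff_of_nonneg zero_le_one |>.mpr fun _ => by simp

lemma norm_le_l2_opNorm_of_mem_spectrum {A : Matrix n n 𝕜} {x : 𝕜} (hx : x ∈ spectrum 𝕜 A) :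
    ‖x‖ ≤ ‖A‖ :=
  (spectrum.norm_le_norm_mul_of_mem hx).trans
    (mul_le_of_le_one_right (norm_nonneg _) l2_opNorm_one_le)

lemma trace_mul_nonneg {A B : Matrix n n ℝ} (hA : 0 ≤ A) (hB : 0 ≤ B) :
    0 ≤ (A * B).trace := by
  obtain ⟨C, rfl⟩ := CStarAlgebra.nonneg_iff_eq_star_mul_self.mp hB
  rw [← Matrix.mul_assoc, trace_mul_cycle, star_eq_conjTranspose]
  exact ((nonneg_iff_posSemidef.mp hA).mul_mul_conjTranspose_same C).trace_nonneg

lemma PosDef.algebraMap_inv_norm_le_inv {A : Matrix n n ℝ} (hA : A.PosDef) :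
    algebraMap ℝ _ ‖A‖⁻¹ ≤ A⁻¹ := by
  have hpos : ∀ x ∈ spectrum ℝ A, 0 < x :=
    (StarOrderedRing.isStrictlyPositive_iff_spectrum_pos A hA.isHermitian.isSelfAdjoint).mp
      hA.isStrictlyPositive
  rw [nonsing_inv_eq_ringInverse, ← cfc_ringInverse_id (R := ℝ) A hA.isUnit]
  refine algebraMap_le_cfc _ _ A (fun x hx => ?_) ?_ hA.isHermitian.isSelfAdjoint
  · exact inv_anti₀ (hpos x hx)
      ((Real.le_norm_self x).trans (norm_le_l2_opNorm_of_mem_spectrum hx))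
  · exact continuousOn_inv₀.mono fun x hx => (hpos x hx).ne'

lemma mul_mul_trace_le_trace_mul_mul_mul {P Q D : Matrix n n ℝ} {a b : ℝ} (ha : 0 ≤ a)
    (hb : 0 ≤ b) (hP : algebraMap ℝ _ a ≤ P) (hQ : algebraMap ℝ _ b ≤ Q) :
    a * b * (D * Dᴴ).trace ≤ (P * D * Q * Dᴴ).trace := by
  have hQ₀ : 0 ≤ Q := by
    refine le_trans ?_ hQ
    rw [Algebra.algebraMap_eq_smul_one]
    exact (PosSemidef.one.smul hb).nonneg
  have hP' : 0 ≤ ((P - algebraMap ℝ _ a) * (D * Q * Dᴴ)).trace :=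
    trace_mul_nonneg (sub_nonneg.mpr hP)
      ((nonneg_iff_posSemidef.mp hQ₀).mul_mul_conjTranspose_same D).nonneg
  have hQ' : 0 ≤ (D * (Q - algebraMap ℝ _ b) * Dᴴ).trace :=
    ((nonneg_iff_posSemidef.mp (sub_nonneg.mpr hQ)).mul_mul_conjTranspose_same D).trace_nonneg
  have hsplit : (P * D * Q * Dᴴ).trace = ((P - algebraMap ℝ _ a) * (D * Q * Dᴴ)).trace
      + a * (D * (Q - algebraMap ℝ _ b) * Dᴴ).trace + a * b * (D * Dᴴ).trace := by
    simp only [Algebra.algebraMap_eq_smul_one, sub_mul, mul_sub, Matrix.smul_mul,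
      Matrix.mul_smul, Matrix.one_mul, Matrix.mul_one, Matrix.mul_assoc, trace_sub, trace_smul,
      smul_eq_mul]
    ring
  nlinarith [mul_nonneg ha hQ']

lemma PosDef.inv_norm_mul_trace_le_trace_inv_sub_inv_mul {A B : Matrix n n ℝ} (hA : A.PosDef)
    (hB : B.PosDef) :
    (‖A‖ * ‖B‖)⁻¹ * ((B - A) * (B - A)ᴴ).trace ≤ ((A⁻¹ - B⁻¹) * (B - A)ᴴ).trace := by
  rw [inv_sub_inv (iff_of_true hA.isUnit hB.isUnit), mul_inv]
  exact mul_mul_trace_le_trace_mul_mul_mul (by positivity) (by positivity)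
    hA.algebraMap_inv_norm_le_inv hB.algebraMap_inv_norm_le_inv

end Matrix

lemma frobNorm_sq {p : ℕ} (A : Matrix (Fin p) (Fin p) ℝ) : frobNorm A ^ 2 = (A * Aᴴ).trace := by
  rw [frobNorm, Real.sq_sqrt (by positivity)]
  simp [Matrix.trace, Matrix.mul_apply, sq]

lemma l2_opNorm_le_frobNorm {p : ℕ} (A : Matrix (Fin p) (Fin p) ℝ) : ‖A‖ ≤ frobNorm A := by
  refine ContinuousLinearMap.opNorm_le_bound _ (Real.sqrt_nonneg _) fun x => ?_
  rw [EuclideanSpace.norm_eq, EuclideanSpace.norm_eq, frobNorm, ← Real.sqrt_mul (by positivity),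
    Real.sqrt_le_sqrt_iff (by positivity), Finset.sum_mul]
  gcongr with i
  simpa [Matrix.mulVec, dotProduct] using Finset.sum_mul_sq_le_sq_mul_sq _ (A i) x

lemma inv_sq_add_one_mul_le {s t f : ℝ} (hs : 0 < s) (ht : 0 < t) (hts : t ≤ s + f)
    (hf : 1 ≤ f) : ((s + 1) ^ 2)⁻¹ * f ≤ (s * t)⁻¹ * f ^ 2 := by
  rw [← div_eq_inv_mul, ← div_eq_inv_mul, div_le_div_iff₀ (by positivity) (by positivity)]
  have hf₀ : 0 ≤ f := zero_le_one.trans hf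
  nlinarith [mul_le_mul_of_nonneg_left hts (mul_nonneg hf₀ hs.le),
    mul_nonneg (mul_nonneg (sub_nonneg.2 hf) hf₀) (sq_nonneg s),
    mul_nonneg (mul_nonneg hf₀ hf₀) hs.le]

theorem rsc_log_det_linear_rate_general (p : ℕ)
    (Θ : Matrix (Fin p) (Fin p) ℝ) (hΘ : Θ.PosDef)
    (Δ : Matrix (Fin p) (Fin p) ℝ)
    (hpd : (Θ + Δ).PosDef) (hF : 1 ≤ frobNorm Δ) :
    traceInner (Θ⁻¹ - (Θ + Δ)⁻¹) Δ ≥ ((specNorm Θ + 1) ^ 2)⁻¹ * frobNorm Δ := by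
  have : Nonempty (Fin p) := by
    by_contra h
    rw [not_nonempty_iff] at h
    norm_num [frobNorm] at hF
  have hs : 0 < ‖Θ‖ := norm_pos_iff.mpr hΘ.isUnit.ne_zero
  have ht : 0 < ‖Θ + Δ‖ := norm_pos_iff.mpr hpd.isUnit.ne_zero
  have hts : ‖Θ + Δ‖ ≤ ‖Θ‖ + frobNorm Δ :=
    (norm_add_le _ _).trans (add_le_add le_rfl (l2_opNorm_le_frobNorm Δ))
  have key := hΘ.inv_norm_mul_trace_le_trace_inv_sub_inv_mul hpd
  rw [add_sub_cancel_left, ← frobNorm_sq] at key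
  rw [traceInner, ← conjTranspose_eq_transpose_of_trivial]
  exact (inv_sq_add_one_mul_le hs ht hts hF).trans key

/-- Linear-rate restricted strong convexity outside the unit Frobenius ball. -/
theorem rsc_log_det_linear_rate (p : ℕ) (hp : 1 ≤ p)
    (Θ : Matrix (Fin p) (Fin p) ℝ) (hΘ : Θ.PosDef)
    (Δ : Matrix (Fin p) (Fin p) ℝ) (hΔ : Δ.IsSymm)
    (hpd : (Θ + Δ).PosDef) (hF : 1 ≤ frobNorm Δ) :
    traceInner (Θ⁻¹ - (Θ + Δ)⁻¹) Δ ≥ ((specNorm Θ + 1) ^ 2)⁻¹ * frobNorm Δ :=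
  rsc_log_det_linear_rate_general p Θ hΘ Δ hpd hF
end

section
/- In the Trimmed Graphical Lasso deterministic setting, under hypotheses (H1)–(H4), the error matrix satisfies ‖Δ̃‖_F ≤ 1. (Lemma 2, deterministic form.) -/
/-!
Suppose `‖Δ̃‖_F > 1`. Restricted strong convexity at the point `Θ* + Δ̃ / ‖Δ̃‖_F` of the unit
sphere, followed by monotonicity of the gradient `-Θ⁻¹` of `-log det` along the rest of the
segment to `Θ̃`, gives `⟨Θ*⁻¹ - Θ̃⁻¹, Δ̃⟩ ≥ κ ‖Δ̃‖_F`. Splitting `Θ*⁻¹ - Θ̃⁻¹` through the two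
weighted sample covariances, stationarity, incoherence and Hölder's inequality bound the same
pairing by `τ₁ ‖Δ̃‖_F + (3/2) λ ‖Δ̃‖₁ ≤ τ₁ ‖Δ̃‖_F + 3 λ R ≤ τ₁ ‖Δ̃‖_F + κ - τ₁`, so
`(κ - τ₁)(‖Δ̃‖_F - 1) ≤ 0` with `κ - τ₁ > 0`.
-/

open Matrix

/-- Entrywise ℓ1 norm: ‖U‖₁ = Σ_{i,j} |U_{ij}|. -/
noncomputable def l1Norm {p : ℕ} (U : Matrix (Fin p) (Fin p) ℝ) : ℝ :=
  ∑ i, ∑ j, |U i j|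

/-- Off-diagonal entrywise ℓ1 norm: ‖U‖_{1,off} = Σ_{i≠j} |U_{ij}|. -/
noncomputable def offNorm {p : ℕ} (U : Matrix (Fin p) (Fin p) ℝ) : ℝ :=
  ∑ ij ∈ Finset.univ.filter (fun ij : Fin p × Fin p => ij.1 ≠ ij.2), |U ij.1 ij.2|

/-- Entrywise sup norm: ‖U‖_∞ = max_{i,j} |U_{ij}|. -/
noncomputable def linfNorm {p : ℕ} (U : Matrix (Fin p) (Fin p) ℝ) : ℝ :=
  ⨆ ij : Fin p × Fin p, |U ij.1 ij.2|

open scoped MatrixOrder ComplexOrder in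
theorem Matrix.PosSemidef.trace_mul_nonneg_s5 {n 𝕜 : Type*} [Fintype n] [RCLike 𝕜]
    {A B : Matrix n n 𝕜} (hA : A.PosSemidef) (hB : B.PosSemidef) : 0 ≤ (A * B).trace := by
  classical
  obtain ⟨X, rfl⟩ := CStarAlgebra.nonneg_iff_eq_star_mul_self.mp hA.nonneg
  rw [star_eq_conjTranspose, Matrix.mul_assoc, trace_mul_comm, Matrix.mul_assoc]
  simpa only [Matrix.mul_assoc] using (hB.mul_mul_conjTranspose_same X).trace_nonneg

section Norms

variable {p : ℕ}

theorem traceInner_eq_sum (U V : Matrix (Fin p) (Fin p) ℝ) :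
    traceInner U V = ∑ i, ∑ j, U i j * V i j := by
  simp [traceInner, trace, mul_apply]

theorem traceInner_add_left (U V W : Matrix (Fin p) (Fin p) ℝ) :
    traceInner (U + V) W = traceInner U W + traceInner V W := by
  rw [traceInner, Matrix.add_mul, trace_add, traceInner, traceInner]

theorem traceInner_sub_left (U V W : Matrix (Fin p) (Fin p) ℝ) :
    traceInner (U - V) W = traceInner U W - traceInner V W := by
  rw [traceInner, Matrix.sub_mul, trace_sub, traceInner, traceInner]

theorem traceInner_smul_right (c : ℝ) (U V : Matrix (Fin p) (Fin p) ℝ) :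
    traceInner U (c • V) = c * traceInner U V := by
  rw [traceInner, transpose_smul, Matrix.mul_smul, trace_smul, smul_eq_mul, traceInner]

theorem frobNorm_smul (c : ℝ) (U : Matrix (Fin p) (Fin p) ℝ) :
    frobNorm (c • U) = |c| * frobNorm U := by
  have hsum : ∑ i, ∑ j, ((c • U) i j) ^ 2 = c ^ 2 * ∑ i, ∑ j, (U i j) ^ 2 := by
    simp [mul_pow, Finset.mul_sum]
  rw [frobNorm, hsum, Real.sqrt_mul (sq_nonneg c), Real.sqrt_sq_eq_abs, frobNorm]

theorem l1Norm_sub_le (A B : Matrix (Fin p) (Fin p) ℝ) :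
    l1Norm (A - B) ≤ l1Norm A + l1Norm B := by
  simp only [l1Norm, ← Finset.sum_add_distrib]
  exact Finset.sum_le_sum fun i _ => Finset.sum_le_sum fun j _ => abs_sub (A i j) (B i j)

theorem offNorm_sub_offNorm_le_l1Norm (A B : Matrix (Fin p) (Fin p) ℝ) :
    offNorm A - offNorm B ≤ l1Norm (B - A) := by
  rw [offNorm, offNorm, ← Finset.sum_sub_distrib, l1Norm, ← Fintype.sum_prod_type']
  calc _ ≤ ∑ ij ∈ Finset.univ.filter (fun ij : Fin p × Fin p => ij.1 ≠ ij.2),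
          |(B - A) ij.1 ij.2| :=
        Finset.sum_le_sum fun ij _ => by
          simpa [abs_sub_comm] using abs_sub_abs_le_abs_sub (A ij.1 ij.2) (B ij.1 ij.2)
    _ ≤ _ := Finset.sum_le_sum_of_subset_of_nonneg (Finset.filter_subset _ _)
        fun _ _ _ => abs_nonneg _

theorem linfNorm_nonneg (U : Matrix (Fin p) (Fin p) ℝ) : 0 ≤ linfNorm U :=
  Real.iSup_nonneg fun _ => abs_nonneg _

theorem abs_traceInner_le (U V : Matrix (Fin p) (Fin p) ℝ) :
    |traceInner U V| ≤ linfNorm U * l1Norm V := by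
  have hentry (i j : Fin p) : |U i j| ≤ linfNorm U :=
    le_ciSup (f := fun ij : Fin p × Fin p => |U ij.1 ij.2|) (Set.finite_range _).bddAbove (i, j)
  rw [traceInner_eq_sum, l1Norm, Finset.mul_sum]
  refine (Finset.abs_sum_le_sum_abs _ _).trans (Finset.sum_le_sum fun i _ => ?_)
  rw [Finset.mul_sum]
  refine (Finset.abs_sum_le_sum_abs _ _).trans (Finset.sum_le_sum fun j _ => ?_)
  rw [abs_mul]
  exact mul_le_mul_of_nonneg_right (hentry i j) (abs_nonneg _)

end Norms

section LogDet

variable {p : ℕ}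

/-- Monotonicity of `Θ ↦ -Θ⁻¹`, the gradient of `-log det`. -/
theorem traceInner_inv_sub_inv_nonneg {A B : Matrix (Fin p) (Fin p) ℝ}
    (hA : A.PosDef) (hB : B.PosDef) : 0 ≤ traceInner (A⁻¹ - B⁻¹) (B - A) := by
  have hinv : A⁻¹ - B⁻¹ = A⁻¹ * (B - A) * B⁻¹ := by
    rw [Matrix.mul_sub, Matrix.sub_mul, Matrix.mul_assoc,
      Matrix.mul_nonsing_inv _ hB.det_pos.ne'.isUnit,
      Matrix.nonsing_inv_mul _ hA.det_pos.ne'.isUnit, Matrix.mul_one, Matrix.one_mul]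
  have hmid := hB.inv.posSemidef.mul_mul_conjTranspose_same (B - A)
  rw [conjTranspose_eq_transpose_of_trivial] at hmid
  rw [traceInner, hinv, Matrix.mul_assoc, Matrix.mul_assoc, ← Matrix.mul_assoc (B - A)]
  exact hA.inv.posSemidef.trace_mul_nonneg_s5 hmid

/-- Hypothesis (H2): restricted strong convexity of `-log det` at `Θ` on the Frobenius unit
ball. -/
def RestrictedStrongConvexity (Θ : Matrix (Fin p) (Fin p) ℝ) (κ : ℝ) : Prop :=
  ∀ Δ : Matrix (Fin p) (Fin p) ℝ, Δ.IsSymm → (Θ + Δ).PosDef → frobNorm Δ ≤ 1 →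
    traceInner (Θ⁻¹ - (Θ + Δ)⁻¹) Δ ≥ κ * (frobNorm Δ) ^ 2

theorem RestrictedStrongConvexity.mul_frobNorm_le_traceInner {Θ Θ' : Matrix (Fin p) (Fin p) ℝ}
    {κ : ℝ} (hrsc : RestrictedStrongConvexity Θ κ) (hΘ : Θ.PosDef) (hΘ' : Θ'.PosDef)
    (hfar : 1 < frobNorm (Θ' - Θ)) :
    κ * frobNorm (Θ' - Θ) ≤ traceInner (Θ⁻¹ - Θ'⁻¹) (Θ' - Θ) := by
  set Δ := Θ' - Θ
  set F := frobNorm Δ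
  have hF : 0 < F := one_pos.trans hfar
  set t := F⁻¹
  have ht : 0 < t := inv_pos.mpr hF
  have ht1 : t < 1 := inv_lt_one_of_one_lt₀ hfar
  set A := Θ + t • Δ
  have hA : A.PosDef := by
    have hconv : A = (1 - t) • Θ + t • Θ' := by simp only [A, Δ]; module
    rw [hconv]
    exact (hΘ.smul (sub_pos.mpr ht1)).add (hΘ'.smul ht)
  have hΔ : Δ.IsSymm :=
    (isHermitian_iff_isSymm.mp hΘ'.isHermitian).sub (isHermitian_iff_isSymm.mp hΘ.isHermitian)
  have hunit : frobNorm (t • Δ) = 1 := by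
    rw [frobNorm_smul, abs_of_pos ht, inv_mul_cancel₀ hF.ne']
  have hnear : κ ≤ t * traceInner (Θ⁻¹ - A⁻¹) Δ := by
    simpa [hunit, traceInner_smul_right] using hrsc (t • Δ) (hΔ.smul t) hA hunit.le
  have hbeyond : 0 ≤ traceInner (A⁻¹ - Θ'⁻¹) Δ := by
    have hrest : Θ' - A = (1 - t) • Δ := by simp only [A, Δ]; module
    have hmono := traceInner_inv_sub_inv_nonneg hA hΘ'
    rw [hrest, traceInner_smul_right] at hmono
    exact nonneg_of_mul_nonneg_right hmono (sub_pos.mpr ht1)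
  rw [← sub_add_sub_cancel Θ⁻¹ A⁻¹ Θ'⁻¹, traceInner_add_left]
  linarith [(le_inv_mul_iff₀ hF).mp hnear]

end LogDet

theorem traceInner_inv_sub_inv_le {p : ℕ} {Θ Θ' S S' : Matrix (Fin p) (Fin p) ℝ}
    {lam τ₁ τ₂ : ℝ}
    (hstat : traceInner (S' - Θ'⁻¹) (Θ' - Θ) ≤ lam * (offNorm Θ - offNorm Θ'))
    (hinc : |traceInner (S' - S) (Θ' - Θ)| ≤ τ₁ * frobNorm (Θ' - Θ) + τ₂ * l1Norm (Θ' - Θ))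
    (hreg : 4 * max (linfNorm (S - Θ⁻¹)) τ₂ ≤ lam) :
    traceInner (Θ⁻¹ - Θ'⁻¹) (Θ' - Θ) ≤ τ₁ * frobNorm (Θ' - Θ) + 3 / 2 * lam * l1Norm (Θ' - Θ) := by
  set Δ := Θ' - Θ
  set L := l1Norm Δ
  have hL : 0 ≤ L := Finset.sum_nonneg fun _ _ => Finset.sum_nonneg fun _ _ => abs_nonneg _
  have hdev : linfNorm (S - Θ⁻¹) ≤ lam / 4 := by linarith [le_max_left (linfNorm (S - Θ⁻¹)) τ₂]
  have hτ₂ : τ₂ ≤ lam / 4 := by linarith [le_max_right (linfNorm (S - Θ⁻¹)) τ₂]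
  have hlam : 0 ≤ lam := by linarith [linfNorm_nonneg (S - Θ⁻¹)]
  have hfit : traceInner (S' - Θ'⁻¹) Δ ≤ lam * L :=
    hstat.trans (mul_le_mul_of_nonneg_left (offNorm_sub_offNorm_le_l1Norm Θ Θ') hlam)
  have hnoise : |traceInner (S - Θ⁻¹) Δ| ≤ lam / 4 * L :=
    (abs_traceInner_le _ _).trans (mul_le_mul_of_nonneg_right hdev hL)
  have hsplit : Θ⁻¹ - Θ'⁻¹ = (S' - Θ'⁻¹) - (S' - S) - (S - Θ⁻¹) := by abel
  rw [hsplit, traceInner_sub_left, traceInner_sub_left]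
  linarith [neg_abs_le (traceInner (S' - S) Δ), neg_abs_le (traceInner (S - Θ⁻¹) Δ),
    mul_le_mul_of_nonneg_right hτ₂ hL]

theorem error_frobNorm_le_one_general
    (p n h : ℕ)
    (x : Fin n → Fin p → ℝ)
    (Θstar Θtil : Matrix (Fin p) (Fin p) ℝ)
    (hΘstar : Θstar.PosDef) (hΘtil : Θtil.PosDef)
    (R : ℝ) (hR : 0 < R) (hΘstarR : l1Norm Θstar ≤ R) (hΘtilR : l1Norm Θtil ≤ R)
    (wtil wstar : Fin n → ℝ)
    (κ τ₁ τ₂ lam : ℝ) (hlam : 0 < lam)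
    (H1 : traceInner
        ((1 / (h : ℝ)) • ∑ i, wtil i • Matrix.vecMulVec (x i) (x i) - Θtil⁻¹)
        (Θtil - Θstar) ≤ lam * (offNorm Θstar - offNorm Θtil))
    (H2 : ∀ Δ : Matrix (Fin p) (Fin p) ℝ, Δ.IsSymm → (Θstar + Δ).PosDef →
        frobNorm Δ ≤ 1 →
        traceInner (Θstar⁻¹ - (Θstar + Δ)⁻¹) Δ ≥ κ * (frobNorm Δ) ^ 2)
    (H3 : |traceInner
        ((1 / (h : ℝ)) • ∑ i, (wtil i - wstar i) • Matrix.vecMulVec (x i) (x i))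
        (Θtil - Θstar)|
        ≤ τ₁ * frobNorm (Θtil - Θstar) + τ₂ * l1Norm (Θtil - Θstar))
    (H4a : 4 * max
        (linfNorm ((1 / (h : ℝ)) • ∑ i, wstar i • Matrix.vecMulVec (x i) (x i) - Θstar⁻¹))
        τ₂ ≤ lam)
    (H4b : lam ≤ (κ - τ₁) / (3 * R)) :
    frobNorm (Θtil - Θstar) ≤ 1 := by
  have hsplit : (1 / (h : ℝ)) • ∑ i, (wtil i - wstar i) • vecMulVec (x i) (x i) =
      (1 / (h : ℝ)) • ∑ i, wtil i • vecMulVec (x i) (x i) -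
        (1 / (h : ℝ)) • ∑ i, wstar i • vecMulVec (x i) (x i) := by
    simp only [sub_smul, Finset.sum_sub_distrib, smul_sub]
  have hupper := traceInner_inv_sub_inv_le H1 (hsplit ▸ H3) H4a
  have hL : l1Norm (Θtil - Θstar) ≤ 2 * R := by linarith [l1Norm_sub_le Θtil Θstar]
  have hgap : 3 * lam * R ≤ κ - τ₁ := by
    rw [le_div_iff₀ (by positivity)] at H4b
    linarith
  by_contra! hfar
  have hlower := RestrictedStrongConvexity.mul_frobNorm_le_traceInner H2 hΘstar hΘtil hfar
  nlinarith [mul_le_mul_of_nonneg_left hL hlam.le, mul_pos (by positivity : 0 < 3 * lam * R)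
    (sub_pos.mpr hfar)]

/-- Lemma 2 (deterministic form): under (H1)–(H4) the error matrix satisfies ‖Δ̃‖_F ≤ 1. -/
theorem error_frobNorm_le_one
    (p n h : ℕ) (hp : 0 < p) (hn : 0 < n) (hh : 0 < h)
    (x : Fin n → Fin p → ℝ)
    (Θstar Θtil : Matrix (Fin p) (Fin p) ℝ)
    (hΘstar : Θstar.PosDef) (hΘtil : Θtil.PosDef)
    (R : ℝ) (hR : 0 < R) (hΘstarR : l1Norm Θstar ≤ R) (hΘtilR : l1Norm Θtil ≤ R)
    (wtil wstar : Fin n → ℝ)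
    (hwtil : ∀ i, wtil i ∈ Set.Icc (0 : ℝ) 1) (hwstar : ∀ i, wstar i ∈ Set.Icc (0 : ℝ) 1)
    (κ τ₁ τ₂ lam : ℝ) (hκ : 0 < κ) (hτ₁ : 0 ≤ τ₁) (hτ₂ : 0 ≤ τ₂) (hlam : 0 < lam)
    (H1 : traceInner
        ((1 / (h : ℝ)) • ∑ i, wtil i • Matrix.vecMulVec (x i) (x i) - Θtil⁻¹)
        (Θtil - Θstar) ≤ lam * (offNorm Θstar - offNorm Θtil))
    (H2 : ∀ Δ : Matrix (Fin p) (Fin p) ℝ, Δ.IsSymm → (Θstar + Δ).PosDef →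
        frobNorm Δ ≤ 1 →
        traceInner (Θstar⁻¹ - (Θstar + Δ)⁻¹) Δ ≥ κ * (frobNorm Δ) ^ 2)
    (H3 : |traceInner
        ((1 / (h : ℝ)) • ∑ i, (wtil i - wstar i) • Matrix.vecMulVec (x i) (x i))
        (Θtil - Θstar)|
        ≤ τ₁ * frobNorm (Θtil - Θstar) + τ₂ * l1Norm (Θtil - Θstar))
    (H4a : 4 * max
        (linfNorm ((1 / (h : ℝ)) • ∑ i, wstar i • Matrix.vecMulVec (x i) (x i) - Θstar⁻¹))
        τ₂ ≤ lam)
    (H4b : lam ≤ (κ - τ₁) / (3 * R)) :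
    frobNorm (Θtil - Θstar) ≤ 1 :=
  error_frobNorm_le_one_general p n h x Θstar Θtil hΘstar hΘtil R hR hΘstarR hΘtilR wtil wstar κ τ₁
    τ₂ lam hlam H1 H2 H3 H4a H4b
end

section
/- Let N ≥ 1 and m ≥ 1 be integers, let v ∈ ℝ^N, and let S_1, …, S_q be pairwise disjoint subsets of {1,…,N} whose union is {1,…,N}, such that |S_j| = m for all 1 ≤ j ≤ q−1, |S_q| ≤ m, and for every 2 ≤ j ≤ q, every i ∈ S_j, and every i' ∈ S_{j−1}, |v_i| ≤ |v_{i'}|. Then Σ_{j=1}^q ‖v_{S_j}‖_2 ≤ ‖v‖_2 + ‖v‖_1/√m, where v_{S_j} denotes the vector obtained from v by setting to zero all coordinates outside S_j. (Block-peeling bound used in the proof of Corollary 1.) -/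
/-! Each block is dominated entrywise by every entry of the preceding full block `U`, so its
entries are at most `‖v_U‖₁ / m` and its squared ℓ² norm is at most `‖v_U‖₁² / m`. Hence
`‖v_{S_{j+1}}‖₂ ≤ ‖v_{S_j}‖₁ / √m`; summing over `j` and bounding the first block by `‖v‖₂`
gives the claim, because the blocks are disjoint. -/

open Finset

lemma sqrt_sum_sq_le_sum_abs_div_sqrt_card {ι : Type*} (v : ι → ℝ) {T U : Finset ι}
    (hcard : #T ≤ #U) (hdom : ∀ i ∈ T, ∀ i' ∈ U, |v i| ≤ |v i'|) :
    √(∑ i ∈ T, v i ^ 2) ≤ (∑ i ∈ U, |v i|) / √(#U : ℝ) := by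
  set A := ∑ i ∈ U, |v i|
  rcases Nat.eq_zero_or_pos #U with hU | hU
  · have hT : T = ∅ := card_eq_zero.mp (by omega)
    simp [hT, hU]
  have hUR : (0 : ℝ) < #U := by exact_mod_cast hU
  have hentry : ∀ i ∈ T, |v i| ≤ A / #U := fun i hi => by
    rw [le_div_iff₀ hUR, mul_comm, ← nsmul_eq_mul]
    exact card_nsmul_le_sum _ _ _ (hdom i hi)
  have hsq : ∑ i ∈ T, v i ^ 2 ≤ A ^ 2 / #U :=
    calc ∑ i ∈ T, v i ^ 2 ≤ ∑ _i ∈ T, (A / #U) ^ 2 :=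
          sum_le_sum fun i hi => by
            rw [← sq_abs]; exact pow_le_pow_left₀ (abs_nonneg _) (hentry i hi) 2
      _ = #T * (A / #U) ^ 2 := by rw [sum_const, nsmul_eq_mul]
      _ ≤ #U * (A / #U) ^ 2 := by gcongr
      _ = A ^ 2 / #U := by field_simp
  calc √(∑ i ∈ T, v i ^ 2) ≤ √(A ^ 2 / #U) := Real.sqrt_le_sqrt hsq
    _ = A / √(#U : ℝ) := by
      rw [Real.sqrt_div (sq_nonneg _), Real.sqrt_sq (sum_nonneg fun i _ => abs_nonneg _)]

lemma sum_sum_le_sum_of_disjoint {ι κ : Type*} [Fintype ι] [Fintype κ] {f : ι → ℝ}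
    (hf : ∀ i, 0 ≤ f i) {S : κ → Finset ι} (hdisj : ∀ j j', j ≠ j' → Disjoint (S j) (S j')) :
    ∑ j, ∑ i ∈ S j, f i ≤ ∑ i, f i := by
  classical
  rw [← sum_biUnion fun j _ j' _ hne => hdisj j j' hne]
  exact sum_le_univ_sum_of_nonneg hf

theorem block_peeling_bound_general (N m : ℕ)
    (v : Fin N → ℝ) (q : ℕ)
    (S : Fin q → Finset (Fin N))
    (hdisj : ∀ j j' : Fin q, j ≠ j' → Disjoint (S j) (S j'))
    (hcard_eq : ∀ j : Fin q, (j : ℕ) + 1 < q → (S j).card = m)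
    (hcard_le : ∀ j : Fin q, (S j).card ≤ m)
    (horder : ∀ j j' : Fin q, (j' : ℕ) + 1 = (j : ℕ) →
      ∀ i ∈ S j, ∀ i' ∈ S j', |v i| ≤ |v i'|) :
    (∑ j : Fin q, Real.sqrt (∑ i ∈ S j, (v i) ^ 2)) ≤
      Real.sqrt (∑ i, (v i) ^ 2) + (∑ i, |v i|) / Real.sqrt m := by
  cases q with
  | zero => simp only [univ_eq_empty, sum_empty]; positivity
  | succ p =>
    set A : Fin (p + 1) → ℝ := fun j => ∑ i ∈ S j, |v i|
    have hfirst : √(∑ i ∈ S 0, v i ^ 2) ≤ √(∑ i, v i ^ 2) :=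
      Real.sqrt_le_sqrt (sum_le_univ_sum_of_nonneg fun i => sq_nonneg _)
    have hnext (j : Fin p) : √(∑ i ∈ S j.succ, v i ^ 2) ≤ A j.castSucc / √(m : ℝ) := by
      have hfull : #(S j.castSucc) = m := hcard_eq _ (by simp)
      rw [← hfull]
      exact sqrt_sum_sq_le_sum_abs_div_sqrt_card v (hfull ▸ hcard_le _)
        (horder _ _ (by simp))
    have hrest : ∑ j : Fin p, A j.castSucc ≤ ∑ i, |v i| :=
      calc ∑ j : Fin p, A j.castSucc ≤ ∑ j, A j := by
            rw [Fin.sum_univ_castSucc]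
            exact le_add_of_nonneg_right (sum_nonneg fun i _ => abs_nonneg _)
        _ ≤ ∑ i, |v i| := sum_sum_le_sum_of_disjoint (fun i => abs_nonneg _) hdisj
    calc ∑ j, √(∑ i ∈ S j, v i ^ 2)
        = √(∑ i ∈ S 0, v i ^ 2) + ∑ j : Fin p, √(∑ i ∈ S j.succ, v i ^ 2) :=
          Fin.sum_univ_succ _
      _ ≤ √(∑ i, v i ^ 2) + ∑ j : Fin p, A j.castSucc / √(m : ℝ) :=
          add_le_add hfirst (sum_le_sum fun j _ => hnext j)
      _ ≤ √(∑ i, v i ^ 2) + (∑ i, |v i|) / √(m : ℝ) := by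
          rw [← sum_div]; gcongr

/-- Block-peeling bound used in the proof of Corollary 1: if the coordinates of v
are partitioned into blocks S_1, …, S_q of size m (the last possibly smaller),
ordered so that every entry of a block is no larger in absolute value than every
entry of the previous block, then Σ_j ‖v_{S_j}‖₂ ≤ ‖v‖₂ + ‖v‖₁/√m. -/
theorem block_peeling_bound (N m : ℕ) (hN : 1 ≤ N) (hm : 1 ≤ m)
    (v : Fin N → ℝ) (q : ℕ) (hq : 0 < q)
    (S : Fin q → Finset (Fin N))
    (hdisj : ∀ j j' : Fin q, j ≠ j' → Disjoint (S j) (S j'))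
    (hunion : Finset.univ.biUnion S = (Finset.univ : Finset (Fin N)))
    (hcard_eq : ∀ j : Fin q, (j : ℕ) + 1 < q → (S j).card = m)
    (hcard_le : ∀ j : Fin q, (S j).card ≤ m)
    (horder : ∀ j j' : Fin q, (j' : ℕ) + 1 = (j : ℕ) →
      ∀ i ∈ S j, ∀ i' ∈ S j', |v i| ≤ |v i'|) :
    (∑ j : Fin q, Real.sqrt (∑ i ∈ S j, (v i) ^ 2)) ≤
      Real.sqrt (∑ i, (v i) ^ 2) + (∑ i, |v i|) / Real.sqrt m :=
  block_peeling_bound_general N m v q S hdisj hcard_eq hcard_le horder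
end
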